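/- Quantum teleportation identity: let TP = (H⊗I)·CNOT acting on registers (M,L), and let |epr⟩ be an EPR pair of length n shared on registers (L,R). For any pure state |φ,τ⟩ on registers (M,N) separable from the EPR pair, TP^{(M,L)} |φ⟩^M |epr⟩^{L,R} |τ⟩^N = 2^{−n} Σ_{z,x∈{0,1}^n} |z⟩^M |x⟩^L ⊗ P_{(z,x)}^R |φ⟩^R |τ⟩^N, where P_{(z,x)} = X^x Z^z. -/

import Mathlib

/-- Amplitudes of an EPR pair of length `n` on two registers: `2^{-n/2}` iff the registers
agree.  -/
noncomputable def eprAmp (n : ℕ) (l r : Fin n → ZMod 2) : ℂ :=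
  ((Real.sqrt (2 ^ n) : ℝ) : ℂ)⁻¹ * (if l = r then 1 else 0)

/-- The teleportation unitary `TP = (H ⊗ I) · CNOT` acting on registers `(M, L)` of a state
on registers `(M, L, R, N)`: transversal `CNOT` from `M` to `L` followed by Hadamards on
`M`.  Written in components: `(TP Ψ)(z, x, r, t) = 2^{-n/2} Σ_m (−1)^{⟨z,m⟩} Ψ(m, x⊕m, r, t)`. -/
noncomputable def tpApply (n : ℕ) (ν : Type) [Fintype ν]
    (Ψ : (Fin n → ZMod 2) × (Fin n → ZMod 2) × (Fin n → ZMod 2) × ν → ℂ) :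
    (Fin n → ZMod 2) × (Fin n → ZMod 2) × (Fin n → ZMod 2) × ν → ℂ :=
  fun p => ((Real.sqrt (2 ^ n) : ℝ) : ℂ)⁻¹ *
    ∑ m : Fin n → ZMod 2,
      (-1 : ℂ) ^ ((∑ i, p.1 i * m i : ZMod 2)).val * Ψ (m, p.2.1 + m, p.2.2.1, p.2.2.2)

/-! After the `CNOT`, the EPR amplitude `⟨x ⊕ m | r⟩` forces the summation variable `m` to be
`r ⊕ x`, so the Hadamard sum collapses to the single term `(−1)^{⟨z, r⊕x⟩} ψ(r⊕x, t)`; the two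
normalisations `2^{-n/2}` of the EPR pair and of the Hadamards combine to `2^{-n}`. -/

lemma ZModModule.add_eq_iff_eq_add {G : Type*} [AddCommGroup G] [Module (ZMod 2) G]
    (x m r : G) : x + m = r ↔ m = r + x := by
  rw [← ZModModule.sub_eq_add r x, eq_sub_iff_add_eq, add_comm]

lemma sum_mul_eprAmp_add_left {n : ℕ} (f : (Fin n → ZMod 2) → ℂ) (x r : Fin n → ZMod 2) :
    ∑ m, f m * eprAmp n (x + m) r = ((Real.sqrt (2 ^ n) : ℝ) : ℂ)⁻¹ * f (r + x) := by
  simp only [eprAmp, ZModModule.add_eq_iff_eq_add, mul_ite, mul_one, mul_zero]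
  rw [Finset.sum_ite_eq', if_pos (Finset.mem_univ _), mul_comm]

lemma ofReal_sqrt_two_pow_inv_mul_self (n : ℕ) :
    ((Real.sqrt (2 ^ n) : ℝ) : ℂ)⁻¹ * ((Real.sqrt (2 ^ n) : ℝ) : ℂ)⁻¹ = ((2 : ℂ) ^ n)⁻¹ := by
  rw [← mul_inv, ← Complex.ofReal_mul, Real.mul_self_sqrt (by positivity)]
  push_cast
  rfl

/-- **quantum teleportation identity.** For any joint state `|φ,τ⟩` of the
message register `M` and an external register `N` (amplitudes `ψ`), separable from the EPR
pair on `(L, R)`,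
`TP^{M,L} |φ⟩^M |epr⟩^{L,R} |τ⟩^N = 2^{-n} Σ_{z,x} |z⟩^M |x⟩^L ⊗ P_{(z,x)}^R |φ⟩^R |τ⟩^N`,
where `P_{(z,x)} = X^x Z^z`, i.e. in components the resulting amplitude at `(z, x, r, t)` is
`2^{-n} (−1)^{⟨z, r⊕x⟩} ψ(r⊕x, t)`. -/
theorem stmt6 (n : ℕ) (ν : Type) [Fintype ν]
    (ψ : (Fin n → ZMod 2) × ν → ℂ) :
    tpApply n ν (fun p => ψ (p.1, p.2.2.2) * eprAmp n p.2.1 p.2.2.1)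
      = fun p => ((2 : ℂ) ^ n)⁻¹ *
          ((-1 : ℂ) ^ ((∑ i, p.1 i * (p.2.2.1 i + p.2.1 i) : ZMod 2)).val *
            ψ (p.2.2.1 + p.2.1, p.2.2.2)) := by
  funext ⟨z, x, r, t⟩
  have collapse := sum_mul_eprAmp_add_left
    (fun m => (-1 : ℂ) ^ ((∑ i, z i * m i : ZMod 2)).val * ψ (m, t)) x r
  simp only [mul_assoc] at collapse
  simp only [tpApply]
  rw [collapse, ← mul_assoc, ofReal_sqrt_two_pow_inv_mul_self]
  rfl
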